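/- arXiv:1507.01362 — 2 statements merged into one kernel-verified Lean document; each statement's English description precedes it below -/
import Mathlib

section
/- Define c_1, c_2 : ℕ³ → ℤ[q] by the recurrences c_1(k22,k12,k11) = q^{2n} c_2(k22-1,k12,k11) + q^{2n-1} c_2(k22,k12-1,k11) + c_1(k22,k12,k11-1) and c_2(k22,k12,k11) = c_2(k22-1,k12,k11) + q^{2n-1} c_2(k22,k12-1,k11) + c_1(k22,k12,k11-1), where n = k22+k12+k11, with c_r = 0 when any argument is negative and c_r(0,0,0) = 1. Then c_2(k22,k12,k11) = q^{k12²} · qmultinomial(k22+k12+k11; k22,k12,k11) evaluated at q², where qmultinomial is the Gaussian multinomial coefficient. -/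
/-!
The solution is unique, so it suffices to exhibit one: with `g(a,b,c) = q^{b²} [a+b+c; a,b,c]_{q²}`
we take `c₂ = g` and `c₁ = q^{2a} g`. By the factorial formula for the `q`-multinomial, each
neighbour of `g(a,b,c)` is a rational multiple of it, e.g.
`(q^{2n} - 1) g(a-1,b,c) = (q^{2a} - 1) g(a,b,c)` with `n = a+b+c`, and these relations also hold
at the boundary, where the neighbour is `0` and so is the factor `q^{2a} - 1`. Multiplying both
recurrences by `q^{2n} - 1` thus reduces them to identities between polynomials in
`q^{2a}, q^{2b}, q^{2c}`.
-/

open Polynomial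

/-- Gaussian binomial coefficient in `ℤ[q]`, via the `q`-Pascal recurrence;
equals `(q)_n / ((q)_k (q)_{n-k})`. -/
noncomputable def qbinom : ℕ → ℕ → Polynomial ℤ
  | _, 0 => 1
  | 0, _ + 1 => 0
  | n + 1, k + 1 => qbinom n k + X ^ (k + 1) * qbinom n (k + 1)

/-- Gaussian multinomial coefficient `(a+b+c; a,b,c)_q = (q)_{a+b+c}/((q)_a(q)_b(q)_c)`. -/
noncomputable def qmult (a b c : ℕ) : Polynomial ℤ :=
  qbinom (a + b + c) a * qbinom (b + c) b

noncomputable def qfact (n : ℕ) : ℤ[X] :=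
  ∏ i ∈ Finset.range n, (X ^ (i + 1) - 1)

lemma qfact_succ (n : ℕ) : qfact (n + 1) = (X ^ (n + 1) - 1) * qfact n := by
  rw [qfact, Finset.prod_range_succ, mul_comm]; rfl

lemma X_pow_sub_one_ne_zero {R : Type*} [Ring R] [Nontrivial R] {n : ℕ} (hn : n ≠ 0) :
    (X ^ n - 1 : R[X]) ≠ 0 := by
  simpa using X_pow_sub_C_ne_zero (Nat.pos_of_ne_zero hn) (1 : R)

lemma qfact_ne_zero (n : ℕ) : qfact n ≠ 0 :=
  Finset.prod_ne_zero_iff.mpr fun i _ => X_pow_sub_one_ne_zero i.succ_ne_zero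

lemma qbinom_zero_right (n : ℕ) : qbinom n 0 = 1 := by
  cases n <;> rfl

lemma qbinom_succ_succ (n k : ℕ) :
    qbinom (n + 1) (k + 1) = qbinom n k + X ^ (k + 1) * qbinom n (k + 1) := rfl

lemma qbinom_eq_zero_of_lt {n k : ℕ} (h : n < k) : qbinom n k = 0 := by
  induction n generalizing k with
  | zero => obtain ⟨k, rfl⟩ := Nat.exists_eq_succ_of_ne_zero h.ne'; rfl
  | succ n ih =>
    obtain ⟨k, rfl⟩ := Nat.exists_eq_succ_of_ne_zero (by omega : k ≠ 0)
    rw [qbinom_succ_succ, ih (by omega), ih (by omega), mul_zero, add_zero]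

lemma qbinom_self (n : ℕ) : qbinom n n = 1 := by
  induction n with
  | zero => rfl
  | succ n ih => rw [qbinom_succ_succ, ih, qbinom_eq_zero_of_lt n.lt_succ_self, mul_zero, add_zero]

lemma qbinom_add_mul_qfact (k m : ℕ) :
    qbinom (k + m) k * (qfact k * qfact m) = qfact (k + m) := by
  induction m generalizing k with
  | zero => simp [qbinom_self, qfact]
  | succ m ihm =>
    induction k with
    | zero => simp [qbinom_zero_right, qfact]
    | succ k ihk =>
      have h₁ := ihk
      have h₂ := ihm (k + 1)
      rw [show k + (m + 1) = k + m + 1 by ring, qfact_succ m] at h₁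
      rw [show k + 1 + m = k + m + 1 by ring, qfact_succ k] at h₂
      rw [show k + 1 + (m + 1) = k + m + 1 + 1 by ring, qbinom_succ_succ, qfact_succ (k + m + 1),
        qfact_succ k, qfact_succ m]
      linear_combination (X ^ (k + 1) - 1 : ℤ[X]) * h₁ + X ^ (k + 1) * (X ^ (m + 1) - 1) * h₂

lemma qmult_mul_qfact (a b c : ℕ) :
    qmult a b c * (qfact a * qfact b * qfact c) = qfact (a + b + c) := by
  have h₁ := qbinom_add_mul_qfact a (b + c)
  have h₂ := qbinom_add_mul_qfact b c
  rw [← add_assoc] at h₁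
  rw [qmult]
  linear_combination h₁ + qbinom (a + b + c) a * qfact a * h₂

lemma qfact_mul_qfact_mul_qfact_ne_zero (a b c : ℕ) : qfact a * qfact b * qfact c ≠ 0 :=
  mul_ne_zero (mul_ne_zero (qfact_ne_zero a) (qfact_ne_zero b)) (qfact_ne_zero c)

lemma qmult_succ_left (a b c : ℕ) :
    (X ^ (a + b + c + 1) - 1) * qmult a b c = (X ^ (a + 1) - 1) * qmult (a + 1) b c := by
  refine mul_right_cancel₀ (qfact_mul_qfact_mul_qfact_ne_zero a b c) ?_
  have h := qmult_mul_qfact (a + 1) b c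
  rw [qfact_succ, show a + 1 + b + c = a + b + c + 1 by ring, qfact_succ] at h
  linear_combination (X ^ (a + b + c + 1) - 1 : ℤ[X]) * qmult_mul_qfact a b c - h

lemma qmult_succ_mid (a b c : ℕ) :
    (X ^ (a + b + c + 1) - 1) * qmult a b c = (X ^ (b + 1) - 1) * qmult a (b + 1) c := by
  refine mul_right_cancel₀ (qfact_mul_qfact_mul_qfact_ne_zero a b c) ?_
  have h := qmult_mul_qfact a (b + 1) c
  rw [qfact_succ, show a + (b + 1) + c = a + b + c + 1 by ring, qfact_succ] at h
  linear_combination (X ^ (a + b + c + 1) - 1 : ℤ[X]) * qmult_mul_qfact a b c - h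

lemma qmult_succ_right (a b c : ℕ) :
    (X ^ (a + b + c + 1) - 1) * qmult a b c = (X ^ (c + 1) - 1) * qmult a b (c + 1) := by
  refine mul_right_cancel₀ (qfact_mul_qfact_mul_qfact_ne_zero a b c) ?_
  have h := qmult_mul_qfact a b (c + 1)
  rw [qfact_succ c, show a + b + (c + 1) = a + b + c + 1 by ring, qfact_succ] at h
  linear_combination (X ^ (a + b + c + 1) - 1 : ℤ[X]) * qmult_mul_qfact a b c - h

lemma X_pow_sub_one_comp_X_sq (k : ℕ) : (X ^ k - 1 : ℤ[X]).comp (X ^ 2) = X ^ (2 * k) - 1 := by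
  rw [sub_comp, pow_comp, X_comp, one_comp, ← pow_mul]

noncomputable def closedForm (a b c : ℕ) : ℤ[X] :=
  X ^ (b ^ 2) * (qmult a b c).comp (X ^ 2)

lemma closedForm_succ_left (a b c : ℕ) :
    (X ^ (2 * (a + b + c + 1)) - 1) * closedForm a b c
      = (X ^ (2 * (a + 1)) - 1) * closedForm (a + 1) b c := by
  have h := congrArg (fun p => X ^ (b ^ 2) * p.comp (X ^ 2)) (qmult_succ_left a b c)
  simp only [mul_comp, X_pow_sub_one_comp_X_sq] at h
  unfold closedForm
  linear_combination h

lemma closedForm_succ_mid (a b c : ℕ) :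
    (X ^ (2 * (a + b + c + 1)) - 1) * X ^ (2 * b + 1) * closedForm a b c
      = (X ^ (2 * (b + 1)) - 1) * closedForm a (b + 1) c := by
  have h := congrArg (fun p => X ^ ((b + 1) ^ 2) * p.comp (X ^ 2)) (qmult_succ_mid a b c)
  simp only [mul_comp, X_pow_sub_one_comp_X_sq] at h
  unfold closedForm
  linear_combination h

lemma closedForm_succ_right (a b c : ℕ) :
    (X ^ (2 * (a + b + c + 1)) - 1) * closedForm a b c
      = (X ^ (2 * (c + 1)) - 1) * closedForm a b (c + 1) := by
  have h := congrArg (fun p => X ^ (b ^ 2) * p.comp (X ^ 2)) (qmult_succ_right a b c)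
  simp only [mul_comp, X_pow_sub_one_comp_X_sq] at h
  unfold closedForm
  linear_combination h

lemma recurrence_solution_step {c₁ c₂ : ℤ → ℤ → ℤ → ℤ[X]}
    (hneg : ∀ a b c : ℤ, a < 0 ∨ b < 0 ∨ c < 0 → c₁ a b c = 0 ∧ c₂ a b c = 0)
    (hrec : ∀ a b c : ℕ, 1 ≤ a + b + c →
      c₁ a b c = X ^ (2 * (a + b + c)) * c₂ ((a : ℤ) - 1) b c
        + X ^ (2 * (a + b + c) - 1) * c₂ a ((b : ℤ) - 1) c
        + c₁ a b ((c : ℤ) - 1) ∧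
      c₂ a b c = c₂ ((a : ℤ) - 1) b c
        + X ^ (2 * (a + b + c) - 1) * c₂ a ((b : ℤ) - 1) c
        + c₁ a b ((c : ℤ) - 1))
    (a b c : ℕ) (hn : a + b + c ≠ 0)
    (ih : ∀ a' b' c' : ℕ, a' + b' + c' < a + b + c →
      c₁ a' b' c' = X ^ (2 * a') * closedForm a' b' c' ∧ c₂ a' b' c' = closedForm a' b' c') :
    c₁ a b c = X ^ (2 * a) * closedForm a b c ∧ c₂ a b c = closedForm a b c := by
  have hA : (X ^ (2 * (a + b + c)) - 1) * c₂ ((a : ℤ) - 1) b c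
      = (X ^ (2 * a) - 1) * closedForm a b c := by
    rcases a with _ | a
    · simp [(hneg (-1) b c (by omega)).2]
    · rw [Nat.cast_succ, add_sub_cancel_right, (ih a b c (by omega)).2,
        show a + 1 + b + c = a + b + c + 1 by ring, closedForm_succ_left]
  have hB : (X ^ (2 * (a + b + c)) - 1) * (X ^ (2 * (a + b + c) - 1) * c₂ a ((b : ℤ) - 1) c)
      = X ^ (2 * (a + c)) * ((X ^ (2 * b) - 1) * closedForm a b c) := by
    rcases b with _ | b
    · simp [(hneg a (-1) c (by omega)).2]
    · rw [Nat.cast_succ, add_sub_cancel_right, (ih a b c (by omega)).2,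
        show 2 * (a + (b + 1) + c) - 1 = 2 * (a + c) + (2 * b + 1) by omega,
        show a + (b + 1) + c = a + b + c + 1 by ring, ← closedForm_succ_mid, pow_add]
      ring
  have hC : (X ^ (2 * (a + b + c)) - 1) * c₁ a b ((c : ℤ) - 1)
      = X ^ (2 * a) * ((X ^ (2 * c) - 1) * closedForm a b c) := by
    rcases c with _ | c
    · simp [(hneg a b (-1) (by omega)).1]
    · rw [Nat.cast_succ, add_sub_cancel_right, (ih a b c (by omega)).1,
        show a + b + (c + 1) = a + b + c + 1 by ring, ← closedForm_succ_right]
      ring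
  obtain ⟨h₁, h₂⟩ := hrec a b c (by omega)
  have hQ : (X ^ (2 * (a + b + c)) - 1 : ℤ[X]) ≠ 0 := X_pow_sub_one_ne_zero (by omega)
  constructor
  · refine mul_left_cancel₀ hQ ?_
    rw [h₁]
    linear_combination X ^ (2 * (a + b + c)) * hA + hB + hC
  · refine mul_left_cancel₀ hQ ?_
    rw [h₂]
    linear_combination hA + hB + hC

/-- if `c₁, c₂ : ℤ³ → ℤ[q]` vanish on negative arguments, equal `1` at
`(0,0,0)`, and satisfy the type `A₂⁽²⁾` recurrences
`c₁(a,b,c) = q^{2n} c₂(a-1,b,c) + q^{2n-1} c₂(a,b-1,c) + c₁(a,b,c-1)` and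
`c₂(a,b,c) = c₂(a-1,b,c) + q^{2n-1} c₂(a,b-1,c) + c₁(a,b,c-1)` with `n = a+b+c ≥ 1`,
then `c₂(a,b,c) = q^{b²} · qmultinomial(a+b+c; a,b,c)` evaluated at `q²`. -/
theorem c2_closed_form
    (c₁ c₂ : ℤ → ℤ → ℤ → Polynomial ℤ)
    (hneg : ∀ a b c : ℤ, a < 0 ∨ b < 0 ∨ c < 0 → c₁ a b c = 0 ∧ c₂ a b c = 0)
    (hinit : c₁ 0 0 0 = 1 ∧ c₂ 0 0 0 = 1)
    (hrec : ∀ a b c : ℕ, 1 ≤ a + b + c →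
      c₁ a b c = X ^ (2 * (a + b + c)) * c₂ ((a : ℤ) - 1) b c
        + X ^ (2 * (a + b + c) - 1) * c₂ a ((b : ℤ) - 1) c
        + c₁ a b ((c : ℤ) - 1) ∧
      c₂ a b c = c₂ ((a : ℤ) - 1) b c
        + X ^ (2 * (a + b + c) - 1) * c₂ a ((b : ℤ) - 1) c
        + c₁ a b ((c : ℤ) - 1)) :
    ∀ a b c : ℕ, c₂ a b c = X ^ (b ^ 2) * (qmult a b c).comp (X ^ 2) := by
  suffices h : ∀ n a b c : ℕ, a + b + c = n →
      c₁ a b c = X ^ (2 * a) * closedForm a b c ∧ c₂ a b c = closedForm a b c from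
    fun a b c => (h _ a b c rfl).2
  intro n
  induction n using Nat.strong_induction_on with
  | _ n ih =>
    intro a b c hn
    rcases Nat.eq_zero_or_pos n with rfl | _
    · obtain ⟨rfl, rfl, rfl⟩ : a = 0 ∧ b = 0 ∧ c = 0 := by omega
      simpa [closedForm, qmult, qbinom_zero_right] using hinit
    · exact recurrence_solution_step hneg hrec a b c (by omega)
        fun a' b' c' h => ih _ (hn ▸ h) a' b' c' rfl
end

section
/- With c_1, c_2 defined by the recurrences in Definition of c_r (type A_2^{(2)}), one has c_1(k22,k12,k11) = q^{k12² + 2·k22} · qmultinomial(k22+k12+k11; k22,k12,k11)_{q²}. -/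
/-!
Write `M(a,b,c)` for the Gaussian multinomial coefficient, extended by zero to negative arguments.
The recurrences determine `c₁, c₂` from their values at smaller `a + b + c`, so it suffices to
check that `c₂ = q^{b²} M(q²)` and `c₁ = q^{2a} c₂` satisfy them. After cancelling the powers of
`q` they become the two `q`-Pascal rules
`M(a,b,c) = q^{b+c} M(a-1,b,c) + q^c M(a,b-1,c) + M(a,b,c-1)` and
`M(a,b,c) = M(a-1,b,c) + q^{a+c} M(a,b-1,c) + q^a M(a,b,c-1)`.
Multiplied by `1 - q^{a+b+c}`, both are sums of the absorption identities
`(1 - q^a) M(a,b,c) = (1 - q^{a+b+c}) M(a-1,b,c)` (and likewise in `b`, `c`), which follow from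
`M(a,b,c) (q)_a (q)_b (q)_c = (q)_{a+b+c}`.
-/

open Polynomial

lemma one_sub_X_pow_ne_zero {R : Type*} [CommRing R] [Nontrivial R] {n : ℕ} (hn : 0 < n) :
    (1 : R[X]) - X ^ n ≠ 0 := by
  rw [← neg_sub, neg_ne_zero, ← C_1]
  exact X_pow_sub_C_ne_zero hn 1

noncomputable def qFactorial (n : ℕ) : ℤ[X] :=
  ∏ i ∈ Finset.range n, (1 - X ^ (i + 1))

lemma qFactorial_zero : qFactorial 0 = 1 := rfl

lemma qFactorial_succ (n : ℕ) : qFactorial (n + 1) = (1 - X ^ (n + 1)) * qFactorial n := by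
  rw [qFactorial, Finset.prod_range_succ, mul_comm]; rfl

lemma qFactorial_ne_zero (n : ℕ) : qFactorial n ≠ 0 :=
  Finset.prod_ne_zero_iff.mpr fun i _ => one_sub_X_pow_ne_zero i.succ_pos

lemma qFactorial_mul_qFactorial_mul_qFactorial_ne_zero (a b c : ℕ) :
    qFactorial a * qFactorial b * qFactorial c ≠ 0 :=
  mul_ne_zero (mul_ne_zero (qFactorial_ne_zero a) (qFactorial_ne_zero b)) (qFactorial_ne_zero c)

lemma qbinom_mul_qFactorial_mul_qFactorial {n k : ℕ} (h : k ≤ n) :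
    qbinom n k * qFactorial k * qFactorial (n - k) = qFactorial n := by
  induction n generalizing k with
  | zero => obtain rfl := Nat.le_zero.mp h; simp [qbinom_zero_right, qFactorial_zero]
  | succ n ih =>
    rcases k with _ | k
    · simp [qbinom_zero_right, qFactorial_zero]
    rw [qbinom_succ_succ, Nat.succ_sub_succ, qFactorial_succ k, qFactorial_succ n]
    rcases (Nat.le_of_succ_le_succ h).eq_or_lt with rfl | hlt
    · have hk := ih le_rfl
      rw [qbinom_eq_zero_of_lt k.lt_succ_self, Nat.sub_self] at *
      linear_combination (1 - X ^ (k + 1)) * hk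
    · obtain ⟨m, rfl⟩ := Nat.exists_eq_add_of_lt hlt
      have hk := ih hlt.le
      have hk' := ih hlt
      rw [show k + m + 1 - k = m + 1 by omega, qFactorial_succ] at hk ⊢
      rw [show k + m + 1 - (k + 1) = m by omega, qFactorial_succ] at hk'
      linear_combination (1 - X ^ (k + 1)) * hk + X ^ (k + 1) * (1 - X ^ (m + 1)) * hk'

lemma qmult_mul_qFactorial (a b c : ℕ) :
    qmult a b c * (qFactorial a * qFactorial b * qFactorial c) = qFactorial (a + b + c) := by
  have hab := qbinom_mul_qFactorial_mul_qFactorial (Nat.le_add_right a (b + c))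
  have hbc := qbinom_mul_qFactorial_mul_qFactorial (Nat.le_add_right b c)
  rw [Nat.add_sub_cancel_left] at hab hbc
  rw [qmult, add_assoc]
  linear_combination qbinom (a + (b + c)) a * qFactorial a * hbc + hab

noncomputable def qmultInt (a b c : ℤ) : ℤ[X] :=
  if 0 ≤ a ∧ 0 ≤ b ∧ 0 ≤ c then qmult a.toNat b.toNat c.toNat else 0

lemma qmultInt_natCast (a b c : ℕ) : qmultInt a b c = qmult a b c := by
  simp [qmultInt]

lemma qmultInt_of_neg {a b c : ℤ} (h : a < 0 ∨ b < 0 ∨ c < 0) : qmultInt a b c = 0 := by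
  rw [qmultInt, if_neg]; omega

lemma one_sub_X_pow_mul_qmultInt_left (a b c : ℕ) :
    (1 - X ^ a) * qmultInt a b c = (1 - X ^ (a + b + c)) * qmultInt (a - 1) b c := by
  rcases a with _ | a
  · simp [qmultInt]
  rw [Nat.cast_succ, add_sub_cancel_right, ← Nat.cast_succ, qmultInt_natCast, qmultInt_natCast]
  refine mul_right_cancel₀ (qFactorial_mul_qFactorial_mul_qFactorial_ne_zero a b c) ?_
  have h := qmult_mul_qFactorial (a + 1) b c
  have h' := qmult_mul_qFactorial a b c
  rw [qFactorial_succ, show a + 1 + b + c = a + b + c + 1 by ring, qFactorial_succ] at h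
  linear_combination h - (1 - X ^ (a + 1 + b + c)) * h'

lemma one_sub_X_pow_mul_qmultInt_mid (a b c : ℕ) :
    (1 - X ^ b) * qmultInt a b c = (1 - X ^ (a + b + c)) * qmultInt a (b - 1) c := by
  rcases b with _ | b
  · simp [qmultInt]
  rw [Nat.cast_succ, add_sub_cancel_right, ← Nat.cast_succ, qmultInt_natCast, qmultInt_natCast]
  refine mul_right_cancel₀ (qFactorial_mul_qFactorial_mul_qFactorial_ne_zero a b c) ?_
  have h := qmult_mul_qFactorial a (b + 1) c
  have h' := qmult_mul_qFactorial a b c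
  rw [qFactorial_succ, show a + (b + 1) + c = a + b + c + 1 by ring, qFactorial_succ] at h
  linear_combination h - (1 - X ^ (a + (b + 1) + c)) * h'

lemma one_sub_X_pow_mul_qmultInt_right (a b c : ℕ) :
    (1 - X ^ c) * qmultInt a b c = (1 - X ^ (a + b + c)) * qmultInt a b (c - 1) := by
  rcases c with _ | c
  · simp [qmultInt]
  rw [Nat.cast_succ, add_sub_cancel_right, ← Nat.cast_succ, qmultInt_natCast, qmultInt_natCast]
  refine mul_right_cancel₀ (qFactorial_mul_qFactorial_mul_qFactorial_ne_zero a b c) ?_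
  have h := qmult_mul_qFactorial a b (c + 1)
  have h' := qmult_mul_qFactorial a b c
  rw [qFactorial_succ, show a + b + (c + 1) = a + b + c + 1 by ring, qFactorial_succ] at h
  linear_combination h - (1 - X ^ (a + b + (c + 1))) * h'

lemma qmultInt_pascal {a b c : ℕ} (h : 0 < a + b + c) :
    qmultInt a b c = X ^ (b + c) * qmultInt (a - 1) b c + X ^ c * qmultInt a (b - 1) c
      + qmultInt a b (c - 1) := by
  refine mul_left_cancel₀ (one_sub_X_pow_ne_zero h) ?_
  linear_combination X ^ (b + c) * one_sub_X_pow_mul_qmultInt_left a b c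
    + X ^ c * one_sub_X_pow_mul_qmultInt_mid a b c + one_sub_X_pow_mul_qmultInt_right a b c

lemma qmultInt_pascal' {a b c : ℕ} (h : 0 < a + b + c) :
    qmultInt a b c = qmultInt (a - 1) b c + X ^ (a + c) * qmultInt a (b - 1) c
      + X ^ a * qmultInt a b (c - 1) := by
  refine mul_left_cancel₀ (one_sub_X_pow_ne_zero h) ?_
  linear_combination one_sub_X_pow_mul_qmultInt_left a b c
    + X ^ (a + c) * one_sub_X_pow_mul_qmultInt_mid a b c
    + X ^ a * one_sub_X_pow_mul_qmultInt_right a b c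

structure A22Recurrence (c₁ c₂ : ℤ → ℤ → ℤ → ℤ[X]) : Prop where
  eq_zero_of_neg : ∀ a b c : ℤ, a < 0 ∨ b < 0 ∨ c < 0 → c₁ a b c = 0 ∧ c₂ a b c = 0
  init : c₁ 0 0 0 = 1 ∧ c₂ 0 0 0 = 1
  recurrence : ∀ a b c : ℕ, 1 ≤ a + b + c →
    c₁ a b c = X ^ (2 * (a + b + c)) * c₂ ((a : ℤ) - 1) b c
      + X ^ (2 * (a + b + c) - 1) * c₂ a ((b : ℤ) - 1) c
      + c₁ a b ((c : ℤ) - 1) ∧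
    c₂ a b c = c₂ ((a : ℤ) - 1) b c
      + X ^ (2 * (a + b + c) - 1) * c₂ a ((b : ℤ) - 1) c
      + c₁ a b ((c : ℤ) - 1)

namespace A22Recurrence

variable {c₁ c₂ d₁ d₂ : ℤ → ℤ → ℤ → ℤ[X]}

theorem unique (h : A22Recurrence c₁ c₂) (h' : A22Recurrence d₁ d₂) : c₁ = d₁ ∧ c₂ = d₂ := by
  have agree_of_neg : ∀ a b c : ℤ, a < 0 ∨ b < 0 ∨ c < 0 →
      c₁ a b c = d₁ a b c ∧ c₂ a b c = d₂ a b c := fun a b c hneg => by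
    obtain ⟨h₁, h₂⟩ := h.eq_zero_of_neg a b c hneg
    obtain ⟨h₁', h₂'⟩ := h'.eq_zero_of_neg a b c hneg
    exact ⟨h₁.trans h₁'.symm, h₂.trans h₂'.symm⟩
  have agree : ∀ n : ℕ, ∀ a b c : ℤ, a + b + c < n →
      c₁ a b c = d₁ a b c ∧ c₂ a b c = d₂ a b c := by
    intro n
    induction n with
    | zero => exact fun a b c hn => agree_of_neg a b c (by omega)
    | succ n ih =>
      intro a b c hn
      by_cases hneg : a < 0 ∨ b < 0 ∨ c < 0
      · exact agree_of_neg a b c hneg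
      lift a to ℕ using by omega
      lift b to ℕ using by omega
      lift c to ℕ using by omega
      rcases Nat.eq_zero_or_pos (a + b + c) with h0 | hpos
      · obtain ⟨rfl, rfl, rfl⟩ : a = 0 ∧ b = 0 ∧ c = 0 := by omega
        exact ⟨h.init.1.trans h'.init.1.symm, h.init.2.trans h'.init.2.symm⟩
      rw [(h.recurrence a b c hpos).1, (h.recurrence a b c hpos).2, (h'.recurrence a b c hpos).1,
        (h'.recurrence a b c hpos).2, (ih (a - 1) b c (by omega)).2, (ih a (b - 1) c (by omega)).2,
        (ih a b (c - 1) (by omega)).1]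
      exact ⟨rfl, rfl⟩
  constructor <;> funext a b c
  exacts [(agree ((a + b + c).toNat + 1) a b c (by omega)).1,
    (agree ((a + b + c).toNat + 1) a b c (by omega)).2]

noncomputable def closedForm₂ (a b c : ℤ) : ℤ[X] :=
  X ^ (b.toNat ^ 2) * expand ℤ 2 (qmultInt a b c)

noncomputable def closedForm₁ (a b c : ℤ) : ℤ[X] :=
  X ^ (2 * a.toNat) * closedForm₂ a b c

lemma X_pow_mul_closedForm₂_sub_one (a b c : ℕ) :
    X ^ (2 * (a + b + c) - 1) * closedForm₂ a ((b : ℤ) - 1) c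
      = X ^ (b ^ 2 + 2 * (a + c)) * expand ℤ 2 (qmultInt a ((b : ℤ) - 1) c) := by
  rcases b with _ | b
  · simp [closedForm₂, qmultInt]
  rw [closedForm₂, Nat.cast_succ, add_sub_cancel_right, Int.toNat_natCast, ← mul_assoc, ← pow_add]
  congr 2
  rw [add_sq]
  omega

theorem closedForm_solves : A22Recurrence closedForm₁ closedForm₂ := by
  refine ⟨fun a b c hneg => ?_, ?_, fun a b c hpos => ?_⟩
  · simp [closedForm₁, closedForm₂, qmultInt_of_neg hneg]
  · simp [closedForm₁, closedForm₂, qmultInt, qmult, qbinom_zero_right]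
  have pascal := congrArg (expand ℤ 2) (qmultInt_pascal hpos)
  have pascal' := congrArg (expand ℤ 2) (qmultInt_pascal' hpos)
  simp only [map_add, map_mul, map_pow, expand_X] at pascal pascal'
  rw [X_pow_mul_closedForm₂_sub_one]
  simp only [closedForm₁, closedForm₂, Int.toNat_natCast]
  constructor
  · linear_combination X ^ (2 * a + b ^ 2) * pascal
  · linear_combination X ^ (b ^ 2) * pascal'

end A22Recurrence

/-- if `c₁, c₂ : ℤ³ → ℤ[q]` vanish on negative arguments, equal `1` at
`(0,0,0)`, and satisfy the type `A₂⁽²⁾` recurrences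
`c₁(a,b,c) = q^{2n} c₂(a-1,b,c) + q^{2n-1} c₂(a,b-1,c) + c₁(a,b,c-1)` and
`c₂(a,b,c) = c₂(a-1,b,c) + q^{2n-1} c₂(a,b-1,c) + c₁(a,b,c-1)` with `n = a+b+c ≥ 1`,
then `c₁(a,b,c) = q^{b²+2a} · qmultinomial(a+b+c; a,b,c)` evaluated at `q²` (STATEMENT 5). -/
theorem c1_closed_form
    (c₁ c₂ : ℤ → ℤ → ℤ → Polynomial ℤ)
    (hneg : ∀ a b c : ℤ, a < 0 ∨ b < 0 ∨ c < 0 → c₁ a b c = 0 ∧ c₂ a b c = 0)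
    (hinit : c₁ 0 0 0 = 1 ∧ c₂ 0 0 0 = 1)
    (hrec : ∀ a b c : ℕ, 1 ≤ a + b + c →
      c₁ a b c = X ^ (2 * (a + b + c)) * c₂ ((a : ℤ) - 1) b c
        + X ^ (2 * (a + b + c) - 1) * c₂ a ((b : ℤ) - 1) c
        + c₁ a b ((c : ℤ) - 1) ∧
      c₂ a b c = c₂ ((a : ℤ) - 1) b c
        + X ^ (2 * (a + b + c) - 1) * c₂ a ((b : ℤ) - 1) c
        + c₁ a b ((c : ℤ) - 1)) :
    ∀ a b c : ℕ, c₁ a b c = X ^ (b ^ 2 + 2 * a) * (qmult a b c).comp (X ^ 2) := by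
  intro a b c
  obtain ⟨rfl, -⟩ := A22Recurrence.unique ⟨hneg, hinit, hrec⟩ A22Recurrence.closedForm_solves
  rw [A22Recurrence.closedForm₁, A22Recurrence.closedForm₂, qmultInt_natCast,
    expand_eq_comp_X_pow, Int.toNat_natCast, Int.toNat_natCast, ← mul_assoc, ← pow_add, add_comm]
end
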